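/- arXiv:2411.07409 — 2 statements merged into one kernel-verified Lean document; each statement's English description precedes it below -/
import Mathlib

section
/- For every number field K, the adele ring of K is a locally compact topological space (indeed a locally compact topological ring). -/
open IsDedekindDomain IsDedekindDomain.HeightOneSpectrum Multiplicative WithZero

namespace AdeleAux

variable {R : Type*} [CommRing R] [IsDedekindDomain R] {K : Type*} [Field K]
  [Algebra R K] [IsFractionRing R K] (v : HeightOneSpectrum R)

lemma exists_pow_lt (γ : (WithZero (Multiplicative ℤ))ˣ) :
    ∃ n : ℕ, (↑(ofAdd (-(n : ℤ))) : WithZero (Multiplicative ℤ)) < γ := by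
  obtain ⟨g, hg⟩ := WithZero.ne_zero_iff_exists.mp γ.ne_zero
  refine ⟨((-g.toAdd).toNat + 1), ?_⟩
  rw [← hg, WithZero.coe_lt_coe, ← ofAdd_toAdd g, Multiplicative.ofAdd_lt, toAdd_ofAdd]
  push_cast
  have := Int.self_le_toNat (-g.toAdd)
  omega

/-- Approximation of a `v`-integral element of `K` by elements of `R`. -/
lemma exists_sub_valuation_le {k : K} (hk : v.valuation K k ≤ 1) (n : ℕ) :
    ∃ r : R, v.valuation K (k - algebraMap R K r) ≤ ↑(ofAdd (-(n : ℤ))) := by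
  obtain ⟨⟨a, s⟩, rfl⟩ := IsLocalization.mk'_surjective (nonZeroDivisors R) k
  dsimp only at hk ⊢
  have hs0 : (s : R) ≠ 0 := nonZeroDivisors.coe_ne_zero s
  have hsv : v.intValuation s ≠ 0 := v.intValuation_ne_zero _ hs0
  obtain ⟨g, hg⟩ := WithZero.ne_zero_iff_exists.mp hsv
  have hg1 : g ≤ 1 := by
    rw [← WithZero.coe_le_coe, hg]; exact v.intValuation_le_one _
  set m : ℕ := (-g.toAdd).toNat with hm
  have hgm : g = ofAdd (-(m : ℤ)) := by
    rw [← ofAdd_toAdd g]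
    congr 1
    have : g.toAdd ≤ 0 := by
      have := Multiplicative.toAdd_le.mpr hg1
      simpa using this
    omega
  have hsm : v.intValuation (s : R) = ↑(ofAdd (-(m : ℤ))) := by rw [← hg, hgm]
  -- `a ∈ v.asIdeal ^ m`
  have hva : v.intValuation a ≤ v.intValuation (s : R) := by
    rw [valuation_of_mk'] at hk
    exact (div_le_one₀ (zero_lt_iff.mpr hsv)).mp hk
  have ham : a ∈ v.asIdeal ^ m := by
    have : v.asIdeal ^ m ∣ Ideal.span {a} := by
      rw [← intValuation_le_pow_iff_dvd]
      exact le_trans hva (le_of_eq hsm)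
    exact (Ideal.span_singleton_le_iff_mem _).mp (Ideal.le_of_dvd this)
  -- factor `(s) = v.asIdeal ^ m * I` with `I` coprime to `v.asIdeal`
  obtain ⟨I, hI⟩ : v.asIdeal ^ m ∣ Ideal.span {(s : R)} := by
    rw [← intValuation_le_pow_iff_dvd]
    exact le_of_eq hsm
  have hnd : ¬ v.asIdeal ∣ I := by
    intro hd
    have : v.asIdeal ^ (m + 1) ∣ Ideal.span {(s : R)} := by
      obtain ⟨J, hJ⟩ := hd
      exact ⟨J, by rw [hI, hJ, pow_succ, mul_assoc]⟩
    rw [← intValuation_le_pow_iff_dvd] at this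
    rw [hsm] at this
    have hlt : (↑(ofAdd (-((m : ℤ) + 1))) : WithZero (Multiplicative ℤ)) <
        ↑(ofAdd (-(m : ℤ))) := by
      rw [WithZero.coe_lt_coe, Multiplicative.ofAdd_lt]; omega
    push_cast at this
    exact absurd this (not_le_of_gt hlt)
  have hmax : v.asIdeal.IsMaximal := v.isMaximal
  have hcop : v.asIdeal ⊔ I = ⊤ := by
    by_contra h
    have h1 : v.asIdeal ≤ v.asIdeal ⊔ I := le_sup_left
    have := hmax.eq_of_le h h1
    exact hnd (Ideal.dvd_iff_le.mpr (le_sup_right.trans this.ge))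
  have hsup : v.asIdeal ^ m ≤ Ideal.span {(s : R)} ⊔ v.asIdeal ^ (m + n) := by
    have h1 : I ⊔ v.asIdeal ^ n = ⊤ :=
      Ideal.sup_pow_eq_top (by rw [sup_comm] at hcop; exact hcop)
    calc v.asIdeal ^ m = v.asIdeal ^ m * (I ⊔ v.asIdeal ^ n) := by rw [h1, Ideal.mul_top]
    _ = v.asIdeal ^ m * I ⊔ v.asIdeal ^ m * v.asIdeal ^ n := Ideal.mul_sup _ _ _
    _ = Ideal.span {(s : R)} ⊔ v.asIdeal ^ (m + n) := by rw [← hI, ← pow_add]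
    _ ≤ Ideal.span {(s : R)} ⊔ v.asIdeal ^ (m + n) := le_rfl
  obtain ⟨x, hx, y, hy, hxy⟩ := Submodule.mem_sup.mp (hsup ham)
  obtain ⟨r, hr⟩ := Ideal.mem_span_singleton'.mp hx
  refine ⟨r, ?_⟩
  -- now estimate the valuation
  have key : (IsLocalization.mk' K a s - algebraMap R K r) * algebraMap R K (s : R)
      = algebraMap R K (a - r * (s : R)) := by
    rw [sub_mul, IsLocalization.mk'_spec, map_sub, map_mul]
  have hy' : v.intValuation (a - r * (s : R)) ≤ ↑(ofAdd (-((m : ℤ) + n))) := by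
    have hmem : a - r * (s : R) ∈ v.asIdeal ^ (m + n) := by
      have hyx : a - r * (s : R) = y := by rw [← hxy, ← hr]; ring
      rw [hyx]; exact hy
    have : v.asIdeal ^ (m + n) ∣ Ideal.span {a - r * (s : R)} :=
      Ideal.dvd_span_singleton.mpr hmem
    have := (intValuation_le_pow_iff_dvd v _ (m + n)).mpr this
    push_cast at this
    exact this
  have hvs : v.valuation K (algebraMap R K (s : R)) = (↑(ofAdd (-(m : ℤ))) :
      WithZero (Multiplicative ℤ)) := by
    rw [valuation_of_algebraMap, hsm]
  have hmul : v.valuation K (IsLocalization.mk' K a s - algebraMap R K r) *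
      ↑(ofAdd (-(m : ℤ))) ≤ ↑(ofAdd (-((m : ℤ) + n))) := by
    rw [← hvs, ← Valuation.map_mul, key, valuation_of_algebraMap]
    exact hy'
  have hne : (↑(ofAdd (-(m : ℤ))) : WithZero (Multiplicative ℤ)) ≠ 0 := WithZero.coe_ne_zero
  calc v.valuation K (IsLocalization.mk' K a s - algebraMap R K r)
      = v.valuation K (IsLocalization.mk' K a s - algebraMap R K r) *
        ↑(ofAdd (-(m : ℤ))) / ↑(ofAdd (-(m : ℤ))) := by
        rw [mul_div_assoc, div_self hne, mul_one]
    _ ≤ ↑(ofAdd (-((m : ℤ) + n))) / ↑(ofAdd (-(m : ℤ))) := by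
        exact (div_le_div_iff_of_pos_right (zero_lt_iff.mpr hne)).mpr hmul
    _ ≤ ↑(ofAdd (-(n : ℤ))) := le_of_eq (by
        rw [← WithZero.coe_div]
        congr 1
        rw [← ofAdd_sub]
        congr 1; ring)

lemma lt_ball_mem_nhds {F : Type*} [Field F] [Valued F (WithZero (Multiplicative ℤ))]
    {c : WithZero (Multiplicative ℤ)} (hc : c ≠ 0) (x : F) :
    {y : F | Valued.v (y - x) < c} ∈ nhds x := by
  have h0 : {y : F | Valued.v y < c} ∈ nhds (0 : F) := by
    by_cases h : ∃ w : F, w ≠ 0 ∧ Valued.v w < c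
    · obtain ⟨w, hw0, hwc⟩ := h
      rw [Valued.mem_nhds_zero]
      refine ⟨Units.mk0 (Valued.v.restrict w) (by simpa using hw0), fun z hz => ?_⟩
      have hz' : Valued.v z < Valued.v w := by simpa using hz
      exact lt_trans hz' hwc
    · push_neg at h
      have hr : c * ↑(ofAdd (-1 : ℤ)) < c := by
        obtain ⟨g, rfl⟩ := WithZero.ne_zero_iff_exists.mp hc
        rw [← WithZero.coe_mul, WithZero.coe_lt_coe]
        rw [← ofAdd_toAdd g, ← ofAdd_add, Multiplicative.ofAdd_lt]
        omega
      haveI : DiscreteTopology F := Valued.discreteTopology_of_forall_lt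
        (mul_ne_zero hc WithZero.coe_ne_zero)
        (fun y hy => lt_of_lt_of_le hr (h y ((Valuation.ne_zero_iff _).mp hy)))
      refine Filter.mem_of_superset ((isOpen_discrete ({0} : Set F)).mem_nhds rfl) ?_
      intro z hz
      rw [Set.mem_singleton_iff.mp hz]
      simpa [zero_lt_iff] using hc
  have hcont : Continuous (fun y : F => y - x) := continuous_sub_right x
  exact hcont.continuousAt.preimage_mem_nhds (by rw [sub_self]; exact h0)

open scoped Multiplicative in
lemma exists_sub_lt (x : v.adicCompletion K) (hx : x ∈ v.adicCompletionIntegers K)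
    (γ : (WithZero (Multiplicative ℤ))ˣ) :
    ∃ r : R, Valued.v (x - algebraMap R (v.adicCompletion K) r) < (γ : WithZero (Multiplicative ℤ)) := by
  obtain ⟨n, hn⟩ := exists_pow_lt γ
  set δ : WithZero (Multiplicative ℤ) := ↑(ofAdd (-(((n + 1) : ℕ) : ℤ))) with hδ
  have hδ0 : δ ≠ 0 := WithZero.coe_ne_zero
  have hδ1 : δ ≤ 1 := by
    rw [hδ, ← WithZero.coe_one, WithZero.coe_le_coe, ← ofAdd_zero, Multiplicative.ofAdd_le]
    push_cast
    omega
  have hδγ : δ < (γ : WithZero (Multiplicative ℤ)) := by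
    refine lt_trans ?_ hn
    rw [hδ, WithZero.coe_lt_coe, Multiplicative.ofAdd_lt]
    push_cast
    omega
  -- use density of `K` in the completion
  letI : Valued K (WithZero (Multiplicative ℤ)) := v.adicValued
  have hU : {y : v.adicCompletion K | Valued.v (y - x) < δ} ∈ nhds x :=
    lt_ball_mem_nhds hδ0 x
  have hdense : x ∈ closure (Set.range ((↑) : K → v.adicCompletion K)) := by
    exact denseRange_algebraMap (K := K) (v := v) x
  obtain ⟨y, hyU, k, rfl⟩ : ∃ y ∈ {y : v.adicCompletion K | Valued.v (y - x) < δ},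
      ∃ k : K, (k : v.adicCompletion K) = y := by
    obtain ⟨y, hy1, hy2⟩ := mem_closure_iff_nhds.mp hdense _ hU
    obtain ⟨k, hk⟩ := hy2
    exact ⟨y, hy1, k, hk⟩
  rw [Set.mem_setOf_eq] at hyU
  have hk1 : v.valuation K k ≤ 1 := by
    have h1 : Valued.v ((k : v.adicCompletion K)) ≤
        max (Valued.v ((k : v.adicCompletion K) - x)) (Valued.v x) := by
      have := Valuation.map_add_le_max' (Valued.v) ((k : v.adicCompletion K) - x) x
      rwa [sub_add_cancel] at this
    rw [valuedAdicCompletion_eq_valuation'] at h1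
    refine le_trans h1 (max_le (le_trans (le_of_lt hyU) hδ1) ?_)
    rwa [← mem_adicCompletionIntegers R K v]
  obtain ⟨r, hr⟩ := exists_sub_valuation_le v hk1 (n + 1)
  refine ⟨r, ?_⟩
  have hsplit : x - algebraMap R (v.adicCompletion K) r =
      (x - (k : v.adicCompletion K)) +
      ((k : v.adicCompletion K) - algebraMap R (v.adicCompletion K) r) := by ring
  have h2 : Valued.v ((k : v.adicCompletion K) - algebraMap R (v.adicCompletion K) r) ≤ δ := by
    have hcoe : algebraMap R (v.adicCompletion K) r =
        ((algebraMap R K r : K) : v.adicCompletion K) := rfl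
    have hsub : ((k - algebraMap R K r : K) : v.adicCompletion K) =
        (k : v.adicCompletion K) - ((algebraMap R K r : K) : v.adicCompletion K) :=
      map_sub (algebraMap K (v.adicCompletion K)) _ _
    rw [hcoe, ← hsub, valuedAdicCompletion_eq_valuation']
    exact hr
  have h3 : Valued.v (x - (k : v.adicCompletion K)) < δ := by
    rwa [Valuation.map_sub_swap]
  calc Valued.v (x - algebraMap R (v.adicCompletion K) r)
      ≤ max (Valued.v (x - (k : v.adicCompletion K)))
        (Valued.v ((k : v.adicCompletion K) - algebraMap R (v.adicCompletion K) r)) := by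
        rw [hsplit]; exact Valuation.map_add_le_max' _ _ _
    _ ≤ δ := max_le (le_of_lt h3) h2
    _ < γ := hδγ

open scoped Multiplicative in
lemma totallyBounded_adicCompletionIntegers
    (hfin : ∀ I : Ideal R, I ≠ ⊥ → Finite (R ⧸ I)) :
    TotallyBounded (v.adicCompletionIntegers K : Set (v.adicCompletion K)) := by
  rw [Filter.HasBasis.totallyBounded_iff
    (Valued.hasBasis_uniformity (v.adicCompletion K) (WithZero (Multiplicative ℤ)))]
  intro γ _
  obtain ⟨n, hn⟩ := exists_pow_lt (Units.mk0 (MonoidWithZeroHom.ValueGroup₀.embedding γ.1) (by simp))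
  have hIne : v.asIdeal ^ n ≠ ⊥ := by
    have h0 : v.asIdeal ≠ 0 := by simpa using v.ne_bot
    simpa using pow_ne_zero n h0
  haveI := hfin _ hIne
  set sec : (R ⧸ v.asIdeal ^ n) → R :=
    Function.surjInv Ideal.Quotient.mk_surjective with hsec
  refine ⟨Set.range (fun q : R ⧸ v.asIdeal ^ n =>
      algebraMap R (v.adicCompletion K) (sec q)), Set.finite_range _, ?_⟩
  intro x hx
  obtain ⟨r, hr⟩ := exists_sub_lt v x hx (Units.mk0 _ (WithZero.coe_ne_zero
    (a := ofAdd (-(n : ℤ)))))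
  set q := Ideal.Quotient.mk (v.asIdeal ^ n) r with hq
  have hout : Ideal.Quotient.mk (v.asIdeal ^ n) (sec q) = q :=
    Function.surjInv_eq Ideal.Quotient.mk_surjective q
  have hqr : r - sec q ∈ v.asIdeal ^ n := Ideal.Quotient.eq.mp (hq ▸ hout.symm)
  have hvsmall : ∀ z : R, z ∈ v.asIdeal ^ n →
      Valued.v (algebraMap R (v.adicCompletion K) z) ≤
        (↑(ofAdd (-(n : ℤ))) : WithZero (Multiplicative ℤ)) := by
    intro z hz
    have hcoe : algebraMap R (v.adicCompletion K) z = ((algebraMap R K z : K) :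
        v.adicCompletion K) := rfl
    rw [hcoe, valuedAdicCompletion_eq_valuation', valuation_of_algebraMap]
    refine (intValuation_le_pow_iff_dvd v z n).mpr ?_
    exact Ideal.dvd_span_singleton.mpr hz
  refine Set.mem_iUnion₂.mpr ⟨algebraMap R (v.adicCompletion K) (sec q),
    Set.mem_range_self q, ?_⟩
  show Valued.v.restrict (algebraMap R (v.adicCompletion K) (sec q) - x) < γ.1
  rw [Valuation.restrict_lt_iff_lt_embedding, Valuation.map_sub_swap]
  have hsplit : x - algebraMap R (v.adicCompletion K) (sec q) =
      (x - algebraMap R (v.adicCompletion K) r) +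
      algebraMap R (v.adicCompletion K) (r - sec q) := by
    rw [RingHom.map_sub]; ring
  calc Valued.v (x - algebraMap R (v.adicCompletion K) (sec q))
      ≤ max (Valued.v (x - algebraMap R (v.adicCompletion K) r))
        (Valued.v (algebraMap R (v.adicCompletion K) (r - sec q))) := by
        rw [hsplit]; exact Valuation.map_add_le_max' _ _ _
    _ < MonoidWithZeroHom.ValueGroup₀.embedding γ.1 := max_lt (lt_trans hr hn) (lt_of_le_of_lt (hvsmall _ hqr) hn)

lemma isCompact_adicCompletionIntegers
    (hfin : ∀ I : Ideal R, I ≠ ⊥ → Finite (R ⧸ I)) :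
    IsCompact (v.adicCompletionIntegers K : Set (v.adicCompletion K)) := by
  rw [isCompact_iff_totallyBounded_isComplete]
  refine ⟨totallyBounded_adicCompletionIntegers v hfin, IsClosed.isComplete ?_⟩
  have hopen : IsOpen (v.adicCompletionIntegers K : Set (v.adicCompletion K)) :=
    Valued.isOpen_valuationSubring (v.adicCompletion K)
  exact AddSubgroup.isClosed_of_isOpen
    ((v.adicCompletionIntegers K).toSubring.toAddSubgroup) hopen

lemma compactSpace_adicCompletionIntegers
    (hfin : ∀ I : Ideal R, I ≠ ⊥ → Finite (R ⧸ I)) :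
    CompactSpace (v.adicCompletionIntegers K) :=
  isCompact_iff_compactSpace.mp (isCompact_adicCompletionIntegers v hfin)

open scoped Multiplicative in
lemma isOpen_le_ball {F : Type*} [Field F] [Valued F (WithZero (Multiplicative ℤ))]
    {c : WithZero (Multiplicative ℤ)} (hc : c ≠ 0) :
    IsOpen {y : F | Valued.v y ≤ c} := by
  rw [isOpen_iff_mem_nhds]
  intro y hy
  refine Filter.mem_of_superset (lt_ball_mem_nhds hc y) (fun z hz => ?_)
  have h1 : Valued.v z ≤ max (Valued.v (z - y)) (Valued.v y) := by
    have := Valuation.map_add_le_max' (Valued.v) (z - y) y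
    rwa [sub_add_cancel] at this
  exact le_trans h1 (max_le (le_of_lt hz) hy)

open scoped Multiplicative in
set_option synthInstance.maxHeartbeats 1000000 in
set_option maxHeartbeats 1000000 in
theorem locallyCompactSpace_finiteAdeleRing
    (R K : Type*) [CommRing R] [IsDedekindDomain R] [Field K] [Algebra R K]
    [IsFractionRing R K]
    (hfin : ∀ I : Ideal R, I ≠ ⊥ → Finite (R ⧸ I)) :
    LocallyCompactSpace (FiniteAdeleRing R K) := by
  classical
  haveI : ∀ v : HeightOneSpectrum R, CompactSpace (v.adicCompletionIntegers K) :=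
    fun v => compactSpace_adicCompletionIntegers v hfin
  haveI hopen : Fact (∀ v : HeightOneSpectrum R,
      IsOpen (v.adicCompletionIntegers K : Set (v.adicCompletion K))) :=
    ⟨fun _ ↦ Valued.isOpen_valuationSubring _⟩
  haveI : ∀ v : HeightOneSpectrum R, LocallyCompactSpace (v.adicCompletion K) := fun v =>
    (isCompact_adicCompletionIntegers v hfin).locallyCompactSpace_of_mem_nhds_of_addGroup
      ((hopen.out v).mem_nhds (zero_mem (v.adicCompletionIntegers K)))
  haveI : WeaklyLocallyCompactSpace (FiniteAdeleRing R K) :=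
    inferInstanceAs (WeaklyLocallyCompactSpace
      (RestrictedProduct (fun v : HeightOneSpectrum R => v.adicCompletion K)
        (fun v => (v.adicCompletionIntegers K : Set (v.adicCompletion K))) Filter.cofinite))
  infer_instance

end AdeleAux

open AdeleAux in
/-- The adele ring of a number field is a locally compact topological space
(indeed a locally compact topological ring). -/
theorem adeleRing_locallyCompact (K : Type*) [Field K] [NumberField K] :
    LocallyCompactSpace (NumberField.AdeleRing (NumberField.RingOfIntegers K) K) := by
  haveI : LocallyCompactSpace (IsDedekindDomain.FiniteAdeleRing (NumberField.RingOfIntegers K) K) :=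
    locallyCompactSpace_finiteAdeleRing (NumberField.RingOfIntegers K) K (fun I hI => by
      exact Ideal.finiteQuotientOfFreeOfNeBot I hI)
  exact inferInstanceAs (LocallyCompactSpace (NumberField.InfiniteAdeleRing K ×
    IsDedekindDomain.FiniteAdeleRing (NumberField.RingOfIntegers K) K))
end

section
/- Artin–Hasse integrality: for a prime p, every coefficient of the formal power series exp(∑_{n ≥ 0} X^{p^n} / p^n) ∈ ℚ[[X]] is a p-integral rational number, i.e., has nonnegative p-adic valuation (equivalently, lies in the localization of ℤ at the prime p). -/
open scoped Classical

/-- The formal power series `∑_{n ≥ 0} X ^ (p ^ n) / p ^ n ∈ ℚ⟦X⟧`: its coefficient in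
degree `m` is `1 / p ^ n` when `m = p ^ n` for some (necessarily unique, since `p` is a
prime) natural number `n`, and `0` otherwise. -/
noncomputable def artinHasseLog (p : ℕ) : PowerSeries ℚ :=
  PowerSeries.mk fun m =>
    if h : ∃ n : ℕ, p ^ n = m then (1 : ℚ) / (p : ℚ) ^ h.choose else 0

/-- The Artin–Hasse exponential `exp (∑_{n ≥ 0} X ^ (p ^ n) / p ^ n) ∈ ℚ⟦X⟧`, obtained by
substituting the series `g = artinHasseLog p` (which has zero constant term) into
`exp T = ∑_{k ≥ 0} T ^ k / k!`.  Since `g` has zero constant term, the coefficient of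
degree `m` of `g ^ k` vanishes for `k > m`, so the coefficient of degree `m` of the
composite is the finite sum `∑_{k = 0}^{m} (coeff m (g ^ k)) / k!`. -/
noncomputable def artinHasseExp (p : ℕ) : PowerSeries ℚ :=
  PowerSeries.mk fun m =>
    ∑ k ∈ Finset.range (m + 1),
      PowerSeries.coeff m (artinHasseLog p ^ k) / (k.factorial : ℚ)

set_option maxHeartbeats 1000000

open PowerSeries Finset
namespace AHwork

variable {R : Type*} [CommRing R] (p : ℕ)

noncomputable def expandP (f : PowerSeries R) : PowerSeries R :=
  PowerSeries.mk fun m => if p ∣ m then PowerSeries.coeff (m / p) f else 0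

@[simp] lemma coeff_expandP (f : PowerSeries R) (m : ℕ) :
    PowerSeries.coeff m (expandP p f) = if p ∣ m then PowerSeries.coeff (m / p) f else 0 := by
  simp [expandP]

lemma expandP_mul (hp : 0 < p) (f g : PowerSeries R) :
    expandP p (f * g) = expandP p f * expandP p g := by
  ext m
  rw [coeff_expandP, PowerSeries.coeff_mul, PowerSeries.coeff_mul]
  by_cases hm : p ∣ m
  · obtain ⟨m', rfl⟩ := hm
    rw [if_pos (Dvd.intro m' rfl), Nat.mul_div_cancel_left _ hp]
    have hinj : Set.InjOn (fun q : ℕ × ℕ => (p * q.1, p * q.2)) (antidiagonal m') := by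
      intro a _ b _ hab
      simp only [Prod.mk.injEq] at hab
      exact Prod.ext (Nat.eq_of_mul_eq_mul_left hp hab.1) (Nat.eq_of_mul_eq_mul_left hp hab.2)
    have himg : ∑ q ∈ antidiagonal m', PowerSeries.coeff q.1 f * PowerSeries.coeff q.2 g
        = ∑ q ∈ (antidiagonal m').image (fun q : ℕ × ℕ => (p * q.1, p * q.2)),
            PowerSeries.coeff q.1 (expandP p f) * PowerSeries.coeff q.2 (expandP p g) := by
      rw [Finset.sum_image hinj]
      refine Finset.sum_congr rfl fun q _ => ?_
      simp [Nat.mul_div_cancel_left _ hp]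
    rw [himg]
    refine Finset.sum_subset ?_ ?_
    · intro q hq
      simp only [Finset.mem_image, Finset.HasAntidiagonal.mem_antidiagonal] at hq ⊢
      obtain ⟨a, ha, rfl⟩ := hq
      rw [← Nat.mul_add, ha]
    · intro x hx hnx
      simp only [Finset.HasAntidiagonal.mem_antidiagonal] at hx
      by_cases h1 : p ∣ x.1
      · by_cases h2 : p ∣ x.2
        · exfalso
          apply hnx
          obtain ⟨a, ha⟩ := h1
          obtain ⟨b, hb⟩ := h2
          refine Finset.mem_image.mpr ⟨(a, b), Finset.HasAntidiagonal.mem_antidiagonal.mpr ?_, ?_⟩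
          · have h3 : p * (a + b) = p * m' := by rw [Nat.mul_add, ← ha, ← hb, hx]
            exact Nat.eq_of_mul_eq_mul_left hp h3
          · simp [← ha, ← hb]
        · simp [coeff_expandP, h2]
      · simp [coeff_expandP, h1]
  · rw [if_neg hm]
    symm
    apply Finset.sum_eq_zero
    intro q hq
    rw [Finset.HasAntidiagonal.mem_antidiagonal] at hq
    by_cases h1 : p ∣ q.1
    · by_cases h2 : p ∣ q.2
      · exact absurd (hq ▸ Nat.dvd_add h1 h2) hm
      · simp [coeff_expandP, h2]
    · simp [coeff_expandP, h1]


lemma expandP_one (hp : 0 < p) : expandP p (1 : PowerSeries R) = 1 := by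
  ext m
  simp only [coeff_expandP, PowerSeries.coeff_one]
  rcases eq_or_ne m 0 with rfl | hm
  · simp
  · rw [if_neg hm]
    split
    · rename_i hd
      rcases hd with ⟨c, rfl⟩
      rw [Nat.mul_div_cancel_left _ hp, if_neg (by rintro rfl; exact hm (by omega))]
    · rfl

lemma expandP_pow (hp : 0 < p) (f : PowerSeries R) (k : ℕ) :
    expandP p (f ^ k) = expandP p f ^ k := by
  induction k with
  | zero => simpa using expandP_one p hp
  | succ n ih => rw [pow_succ, pow_succ, expandP_mul p hp, ih]

lemma expandP_map {S : Type*} [CommRing S] (σ : R →+* S) (f : PowerSeries R) :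
    expandP p (PowerSeries.map σ f) = PowerSeries.map σ (expandP p f) := by
  ext m
  simp only [coeff_expandP, PowerSeries.coeff_map]
  split <;> simp

lemma expandP_coe (hp : 0 < p) (Q : Polynomial R) :
    expandP p (Q : PowerSeries R) = ((Polynomial.expand R p Q : Polynomial R) : PowerSeries R) := by
  ext m
  simp only [coeff_expandP, Polynomial.coeff_coe, Polynomial.coeff_expand hp]

/-- Frobenius for power series over `ZMod p`. -/
lemma pow_p_eq_expandP (p : ℕ) [Fact p.Prime] (K : PowerSeries (ZMod p)) :
    K ^ p = expandP p K := by
  have hp : 0 < p := (Fact.out : p.Prime).pos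
  ext m
  set Q : Polynomial (ZMod p) := PowerSeries.trunc (m + 1) K with hQ
  have hdvd : (PowerSeries.X : PowerSeries (ZMod p)) ^ (m + 1) ∣ (K - ↑Q) := by
    rw [PowerSeries.X_pow_dvd_iff]
    intro i hi
    simp [hQ, Polynomial.coeff_coe, PowerSeries.coeff_trunc, hi]
  have hsub : (PowerSeries.X : PowerSeries (ZMod p)) ^ (m + 1) ∣ (K ^ p - (↑Q : PowerSeries (ZMod p)) ^ p) :=
    hdvd.trans (sub_dvd_pow_sub_pow _ _ p)
  have hcoeff : PowerSeries.coeff m (K ^ p) = PowerSeries.coeff m ((↑Q : PowerSeries (ZMod p)) ^ p) := by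
    have := (PowerSeries.X_pow_dvd_iff.mp hsub) m (Nat.lt_succ_self m)
    rw [map_sub, sub_eq_zero] at this
    exact this
  have hfrob : (Q : Polynomial (ZMod p)) ^ p = Polynomial.expand (ZMod p) p Q := by
    have h1 := Polynomial.map_frobenius_expand (p := p) Q
    rw [ZMod.frobenius_zmod, Polynomial.map_id] at h1
    exact h1.symm
  rw [hcoeff, ← Polynomial.coe_pow, hfrob, ← expandP_coe p hp Q, coeff_expandP, coeff_expandP]
  split
  · rename_i hd
    have : m / p ≤ m := Nat.div_le_self m p
    simp [hQ, Polynomial.coeff_coe, PowerSeries.coeff_trunc, Nat.lt_succ_of_le this]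
  · rfl


lemma norm_coeff_powp_sub_expandP (p : ℕ) [Fact p.Prime] (G : PowerSeries ℚ_[p])
    (hG : ∀ i, ‖PowerSeries.coeff i G‖ ≤ 1) (m : ℕ) :
    ‖PowerSeries.coeff m (G ^ p) - PowerSeries.coeff m (expandP p G)‖ ≤ (p : ℝ)⁻¹ := by
  set G₀ : PowerSeries ℤ_[p] := PowerSeries.mk (fun i => ⟨PowerSeries.coeff i G, hG i⟩) with hG₀
  have hmap : PowerSeries.map (PadicInt.Coe.ringHom) G₀ = G := by
    ext i
    simp only [PowerSeries.coeff_map, hG₀, PowerSeries.coeff_mk]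
    exact (congrArg PadicInt.Coe.ringHom (PowerSeries.coeff_mk _ _)).trans rfl
  set x : ℤ_[p] := PowerSeries.coeff m (G₀ ^ p - expandP p G₀) with hx
  have heq : PowerSeries.coeff m (G ^ p) - PowerSeries.coeff m (expandP p G)
      = (x : ℚ_[p]) := by
    rw [hx, map_sub, ← hmap, ← map_pow, expandP_map]
    simp only [PowerSeries.coeff_map]
    rfl
  rw [heq, ← PadicInt.norm_def]
  have h1 : ‖x‖ ≤ (p : ℝ) ^ (-(1:ℕ) : ℤ) := by
    rw [PadicInt.norm_le_pow_iff_mem_span_pow, pow_one, ← PadicInt.maximalIdeal_eq_span_p,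
      ← PadicInt.ker_toZMod, RingHom.mem_ker]
    have : PadicInt.toZMod x = PowerSeries.coeff m
        (PowerSeries.map (PadicInt.toZMod) (G₀ ^ p - expandP p G₀)) := by
      rw [PowerSeries.coeff_map]
    rw [this, map_sub, map_pow, ← expandP_map, pow_p_eq_expandP, sub_self, map_zero]
  simpa using h1


variable {K : Type*} [Field K] [CharZero K]

/-- exp-composition: `E f = ∑ f^k/k!`, valid when `constantCoeff f = 0`. -/
noncomputable def E (f : PowerSeries K) : PowerSeries K :=
  PowerSeries.mk fun m => ∑ k ∈ Finset.range (m + 1),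
    PowerSeries.coeff m (f ^ k) / (k.factorial : K)

lemma coeff_E (f : PowerSeries K) (m : ℕ) :
    PowerSeries.coeff m (E f) = ∑ k ∈ Finset.range (m + 1),
      PowerSeries.coeff m (f ^ k) / (k.factorial : K) := by
  simp [E]

lemma coeff_pow_eq_zero {f : PowerSeries K} (hf : constantCoeff f = 0)
    {m k : ℕ} (h : m < k) : PowerSeries.coeff m (f ^ k) = 0 := by
  have : (X : PowerSeries K) ^ k ∣ f ^ k :=
    pow_dvd_pow_of_dvd (PowerSeries.X_dvd_iff.mpr hf) k
  exact PowerSeries.X_pow_dvd_iff.mp this m h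

lemma coeff_mul_pow_eq_zero {f g : PowerSeries K} (hf : constantCoeff f = 0)
    (hg : constantCoeff g = 0) {m a b : ℕ} (h : m < a + b) :
    PowerSeries.coeff m (f ^ a * g ^ b) = 0 := by
  have : (X : PowerSeries K) ^ (a + b) ∣ f ^ a * g ^ b := by
    rw [pow_add]
    exact mul_dvd_mul (pow_dvd_pow_of_dvd (PowerSeries.X_dvd_iff.mpr hf) a)
      (pow_dvd_pow_of_dvd (PowerSeries.X_dvd_iff.mpr hg) b)
  exact PowerSeries.X_pow_dvd_iff.mp this m h

lemma coeff_E_ext {f : PowerSeries K} (hf : constantCoeff f = 0) {m N : ℕ} (h : m ≤ N) :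
    PowerSeries.coeff m (E f) = ∑ k ∈ Finset.range (N + 1),
      PowerSeries.coeff m (f ^ k) / (k.factorial : K) := by
  rw [coeff_E]
  apply Finset.sum_subset (Finset.range_subset_range.mpr (by omega))
  intro k _ hk
  rw [Finset.mem_range, not_lt] at hk
  rw [coeff_pow_eq_zero hf (by omega), zero_div]

lemma choose_div_factorial (a b : ℕ) :
    (((a + b).choose a : K)) / (((a + b).factorial : K)) =
      1 / ((a.factorial : K) * (b.factorial : K)) := by
  have h2 : ((a.factorial : K) * (b.factorial : K)) ≠ 0 :=
    mul_ne_zero (Nat.cast_ne_zero.mpr a.factorial_ne_zero) (Nat.cast_ne_zero.mpr b.factorial_ne_zero)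
  have hfac : ((a + b).choose a : K) * ((a.factorial : K) * (b.factorial : K))
      = ((a + b).factorial : K) := by
    have h3 := Nat.add_choose_mul_factorial_mul_factorial b a
    rw [Nat.add_comm b a] at h3
    push_cast [← h3]
    ring
  rw [div_eq_div_iff (Nat.cast_ne_zero.mpr (a + b).factorial_ne_zero) h2, one_mul, ← hfac]

lemma E_mul {f g : PowerSeries K} (hf : constantCoeff f = 0)
    (hg : constantCoeff g = 0) : E (f + g) = E f * E g := by
  ext m
  -- common target
  set h : ℕ × ℕ → K := fun ab =>
    PowerSeries.coeff m (f ^ ab.1 * g ^ ab.2) / ((ab.1.factorial : K) * (ab.2.factorial : K))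
    with hh
  have hT : ∀ S : Finset (ℕ × ℕ), True := fun _ => trivial
  have step1 : PowerSeries.coeff m (E (f + g)) =
      ∑ k ∈ Finset.range (m + 1), ∑ ab ∈ Finset.HasAntidiagonal.antidiagonal k, h ab := by
    rw [coeff_E]
    refine Finset.sum_congr rfl fun k _ => ?_
    rw [(Commute.all f g).add_pow', map_sum]
    rw [Finset.sum_div]
    refine Finset.sum_congr rfl fun ab hab => ?_
    rw [Finset.HasAntidiagonal.mem_antidiagonal] at hab
    rw [map_nsmul, nsmul_eq_mul, hh]
    have : ((k.choose ab.1 : K)) / (k.factorial : K) =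
        1 / ((ab.1.factorial : K) * (ab.2.factorial : K)) := by
      rw [← hab]; exact choose_div_factorial ab.1 ab.2
    rw [mul_comm, mul_div_assoc, this, mul_one_div]
  have hsquare : ∑ ab ∈ Finset.range (m + 1) ×ˢ Finset.range (m + 1), h ab =
      ∑ k ∈ Finset.range (m + 1), ∑ ab ∈ Finset.HasAntidiagonal.antidiagonal k, h ab := by
    have hvan : ∀ ab ∈ Finset.range (m + 1) ×ˢ Finset.range (m + 1),
        ab ∉ (Finset.range (m + 1) ×ˢ Finset.range (m + 1)).filter
          (fun ab : ℕ × ℕ => ab.1 + ab.2 ≤ m) → h ab = 0 := by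
      intro ab hab hnab
      have : ¬ (ab.1 + ab.2 ≤ m) := by
        intro hle
        exact hnab (Finset.mem_filter.mpr ⟨hab, hle⟩)
      simp only [hh]
      rw [coeff_mul_pow_eq_zero hf hg (show m < ab.1 + ab.2 by omega), zero_div]
    rw [← Finset.sum_subset (Finset.filter_subset _ _) hvan]
    rw [← Finset.sum_fiberwise_of_maps_to (g := fun ab : ℕ × ℕ => ab.1 + ab.2)
      (t := Finset.range (m + 1)) (fun x hx => Finset.mem_range.mpr
        (show x.1 + x.2 < m + 1 by have := (Finset.mem_filter.mp hx).2; omega))]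
    refine Finset.sum_congr rfl fun k hk => ?_
    rw [Finset.mem_range] at hk
    refine Finset.sum_congr ?_ (fun _ _ => rfl)
    ext ab
    simp only [Finset.mem_filter, Finset.mem_product, Finset.mem_range,
      Finset.HasAntidiagonal.mem_antidiagonal]
    omega
  have step2 : PowerSeries.coeff m (E f * E g) =
      ∑ ab ∈ Finset.range (m + 1) ×ˢ Finset.range (m + 1), h ab := by
    rw [PowerSeries.coeff_mul]
    have hco : ∀ ij ∈ Finset.HasAntidiagonal.antidiagonal m,
        PowerSeries.coeff ij.1 (E f) * PowerSeries.coeff ij.2 (E g)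
        = ∑ a ∈ Finset.range (m + 1), ∑ b ∈ Finset.range (m + 1),
            (PowerSeries.coeff ij.1 (f ^ a) * PowerSeries.coeff ij.2 (g ^ b)) /
              ((a.factorial : K) * (b.factorial : K)) := by
      intro ij hij
      rw [Finset.HasAntidiagonal.mem_antidiagonal] at hij
      rw [coeff_E_ext hf (by omega : ij.1 ≤ m), coeff_E_ext hg (by omega : ij.2 ≤ m),
        Finset.sum_mul_sum]
      refine Finset.sum_congr rfl fun a _ => Finset.sum_congr rfl fun b _ => ?_
      rw [div_mul_div_comm]
    rw [Finset.sum_congr rfl hco, Finset.sum_comm]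
    rw [Finset.sum_product]
    refine Finset.sum_congr rfl fun a _ => ?_
    rw [Finset.sum_comm]
    refine Finset.sum_congr rfl fun b _ => ?_
    simp only [hh]
    rw [← Finset.sum_div, ← PowerSeries.coeff_mul]
  rw [step1, step2, hsquare]

lemma E_zero : E (0 : PowerSeries K) = 1 := by
  ext m
  rw [coeff_E]
  rcases Nat.eq_zero_or_pos m with rfl | hm
  · simp
  · rw [Finset.sum_eq_zero, PowerSeries.coeff_one, if_neg (by omega)]
    intro k hk
    rcases Nat.eq_zero_or_pos k with rfl | hkpos
    · rw [pow_zero, PowerSeries.coeff_one, if_neg (by omega), zero_div]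
    · rw [zero_pow (by omega), map_zero, zero_div]

lemma E_pow {f : PowerSeries K} (hf : constantCoeff f = 0) (n : ℕ) :
    E f ^ n = E (n • f) := by
  induction n with
  | zero => simp [E_zero]
  | succ k ih =>
      rw [pow_succ, ih, succ_nsmul, E_mul (by simp [hf]) hf]

lemma constantCoeff_nsmul {f : PowerSeries K} (hf : constantCoeff f = 0) (n : ℕ) :
    constantCoeff (n • f) = 0 := by simp [hf]

lemma E_expandP (p : ℕ) (hp : 0 < p) {f : PowerSeries K} (hf : constantCoeff f = 0) :
    E (expandP p f) = expandP p (E f) := by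
  ext m
  rw [coeff_E, coeff_expandP]
  by_cases hd : p ∣ m
  · rw [if_pos hd]
    obtain ⟨m', rfl⟩ := hd
    rw [Nat.mul_div_cancel_left _ hp, coeff_E]
    have hm' : m' ≤ p * m' := Nat.le_mul_of_pos_left m' hp
    have hstep : ∀ k, PowerSeries.coeff (p * m') (expandP p f ^ k)
        = PowerSeries.coeff m' (f ^ k) := by
      intro k
      rw [← expandP_pow p hp, coeff_expandP, if_pos (Dvd.intro m' rfl),
        Nat.mul_div_cancel_left _ hp]
    calc ∑ k ∈ Finset.range (p * m' + 1),
          PowerSeries.coeff (p * m') (expandP p f ^ k) / (k.factorial : K)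
        = ∑ k ∈ Finset.range (p * m' + 1),
          PowerSeries.coeff m' (f ^ k) / (k.factorial : K) := by
          exact Finset.sum_congr rfl fun k _ => by rw [hstep]
      _ = ∑ k ∈ Finset.range (m' + 1),
          PowerSeries.coeff m' (f ^ k) / (k.factorial : K) := by
          refine (Finset.sum_subset (Finset.range_subset_range.mpr (by omega)) ?_).symm
          intro k _ hk
          rw [Finset.mem_range, not_lt] at hk
          rw [coeff_pow_eq_zero hf (by omega), zero_div]
  · rw [if_neg hd]
    apply Finset.sum_eq_zero
    intro k _
    rw [← expandP_pow p hp, coeff_expandP, if_neg hd, zero_div]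


section AHspecific

variable {p : ℕ}

lemma coeff_AHL_pow (hp : 1 < p) (n : ℕ) :
    PowerSeries.coeff (p ^ n) (artinHasseLog p) = 1 / (p : ℚ) ^ n := by
  rw [artinHasseLog, PowerSeries.coeff_mk]
  have hex : ∃ k : ℕ, p ^ k = p ^ n := ⟨n, rfl⟩
  rw [dif_pos hex]
  have : hex.choose = n := Nat.pow_right_injective hp hex.choose_spec
  rw [this]

lemma coeff_AHL_zero {m : ℕ} (h : ¬∃ n : ℕ, p ^ n = m) :
    PowerSeries.coeff m (artinHasseLog p) = 0 := by
  rw [artinHasseLog, PowerSeries.coeff_mk, dif_neg h]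

lemma constCoeff_AHL (hp : 1 < p) : constantCoeff (artinHasseLog p) = 0 := by
  rw [← PowerSeries.coeff_zero_eq_constantCoeff_apply]
  apply coeff_AHL_zero
  rintro ⟨n, hn⟩
  have : 0 < p ^ n := Nat.pow_pos (by omega)
  omega


/-- the key logarithmic identity `p • L = L(X^p) + p X` over `ℚ`. -/
lemma key_identity (hp : 1 < p) :
    (p : ℕ) • artinHasseLog p
      = expandP p (artinHasseLog p) + PowerSeries.C (p : ℚ) * PowerSeries.X := by
  have hp0 : (0:ℕ) < p := by omega
  have hpQ : (p : ℚ) ≠ 0 := by positivity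
  ext m
  rw [map_nsmul, map_add, coeff_expandP, nsmul_eq_mul]
  by_cases hex : ∃ n : ℕ, p ^ n = m
  · obtain ⟨n, rfl⟩ := hex
    rw [coeff_AHL_pow hp]
    cases n with
    | zero =>
        have hnd : ¬ p ∣ p ^ 0 := by
          rw [pow_zero]
          intro h
          have := Nat.le_of_dvd Nat.one_pos h
          omega
        rw [if_neg hnd, PowerSeries.coeff_C_mul, PowerSeries.coeff_X]
        norm_num
    | succ k =>
        have hdvd : p ∣ p ^ (k + 1) := dvd_pow_self p (Nat.succ_ne_zero k)
        rw [if_pos hdvd]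
        have hdivp : p ^ (k + 1) / p = p ^ k := by
          rw [pow_succ, Nat.mul_div_cancel _ hp0]
        rw [hdivp, coeff_AHL_pow hp]
        have hne1 : p ^ (k + 1) ≠ 1 := by
          have h9 : p ≤ p ^ (k + 1) := Nat.le_self_pow (Nat.succ_ne_zero k) p
          omega
        rw [PowerSeries.coeff_C_mul, PowerSeries.coeff_X, if_neg hne1]
        rw [pow_succ]
        field_simp
        ring
  · rw [coeff_AHL_zero hex, mul_zero]
    have hm1 : m ≠ 1 := fun h => hex ⟨0, by rw [pow_zero, h]⟩
    rw [PowerSeries.coeff_C_mul, PowerSeries.coeff_X, if_neg hm1, mul_zero, add_zero]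
    split
    · rename_i hdvd
      rw [coeff_AHL_zero]
      rintro ⟨n, hn⟩
      exact hex ⟨n + 1, by rw [pow_succ, hn, Nat.mul_comm, Nat.mul_div_cancel' hdvd]⟩

    · rfl

end AHspecific

section Padic

variable (p : ℕ) [Fact p.Prime]

noncomputable def Lp : PowerSeries ℚ_[p] :=
  PowerSeries.map (Rat.castHom ℚ_[p]) (artinHasseLog p)

noncomputable def Fp : PowerSeries ℚ_[p] := E (Lp p)

lemma hp1 : 1 < p := (Fact.out : p.Prime).one_lt

lemma constCoeff_Lp : constantCoeff (Lp p) = 0 := by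
  rw [← PowerSeries.coeff_zero_eq_constantCoeff_apply, Lp, PowerSeries.coeff_map,
    PowerSeries.coeff_zero_eq_constantCoeff_apply, constCoeff_AHL (hp1 p), map_zero]

lemma map_AHexp : PowerSeries.map (Rat.castHom ℚ_[p]) (artinHasseExp p) = Fp p := by
  ext m
  rw [PowerSeries.coeff_map, artinHasseExp, PowerSeries.coeff_mk, Fp, coeff_E, map_sum]
  refine Finset.sum_congr rfl fun k _ => ?_
  rw [map_div₀, map_natCast, Lp, ← map_pow, PowerSeries.coeff_map]

lemma funEq :
    (Fp p) ^ p = expandP p (Fp p) *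
      E (PowerSeries.C (p : ℚ_[p]) * PowerSeries.X) := by
  have hpos : 0 < p := by have := hp1 p; omega
  have h0 : constantCoeff (Lp p) = 0 := constCoeff_Lp p
  have hkey := congrArg (PowerSeries.map (Rat.castHom ℚ_[p])) (key_identity (hp1 p))
  rw [map_nsmul, map_add, ← expandP_map, map_mul, PowerSeries.map_C, PowerSeries.map_X,
    map_natCast] at hkey
  have h1 : constantCoeff (expandP p (Lp p)) = 0 := by
    rw [← PowerSeries.coeff_zero_eq_constantCoeff_apply, coeff_expandP, if_pos (dvd_zero p),
      Nat.zero_div, PowerSeries.coeff_zero_eq_constantCoeff_apply, h0]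
  have h2 : constantCoeff (PowerSeries.C (p : ℚ_[p]) * PowerSeries.X) = 0 := by
    simp
  have hkey' : p • Lp p = expandP p (Lp p) + PowerSeries.C (p : ℚ_[p]) * PowerSeries.X :=
    hkey
  rw [Fp, E_pow h0 p, hkey', E_mul h1 h2, E_expandP p hpos h0]

lemma coeff_EpX (m : ℕ) :
    PowerSeries.coeff m (E (PowerSeries.C (p : ℚ_[p]) * PowerSeries.X))
      = (p : ℚ_[p]) ^ m / (m.factorial : ℚ_[p]) := by
  rw [coeff_E]
  rw [Finset.sum_eq_single m]
  · rw [mul_pow, ← map_pow, PowerSeries.coeff_C_mul, PowerSeries.coeff_X_pow, if_pos rfl,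
      mul_one]
  · intro k _ hk
    rw [mul_pow, ← map_pow, PowerSeries.coeff_C_mul, PowerSeries.coeff_X_pow,
      if_neg (fun h => hk h.symm), mul_zero, zero_div]
  · intro hm
    exact absurd (Finset.mem_range.mpr (by omega)) hm

lemma ofDigits_eq_zero {l : List ℕ} (h : ∀ x ∈ l, x = 0) : Nat.ofDigits p l = 0 := by
  induction l with
  | nil => simp [Nat.ofDigits_nil]
  | cons d t ih =>
      rw [Nat.ofDigits_cons, h d (List.mem_cons_self),
        ih fun x hx => h x (List.mem_cons_of_mem d hx)]
      simp

lemma one_le_digitSum {k : ℕ} (hk : k ≠ 0) : 1 ≤ (Nat.digits p k).sum := by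
  by_contra h
  have hsum : (Nat.digits p k).sum = 0 := by omega
  have hall : ∀ x ∈ Nat.digits p k, x = 0 := List.sum_eq_zero_iff.mp hsum
  exact hk (by rw [← Nat.ofDigits_digits p k, ofDigits_eq_zero p hall])

lemma padicValNat_factorial_le {k : ℕ} (hk : 1 ≤ k) :
    padicValNat p (k.factorial) ≤ k - 1 := by
  have hleg := sub_one_mul_padicValNat_factorial (p := p) k
  have hs := one_le_digitSum p (by omega : k ≠ 0)
  have h2 : padicValNat p (k.factorial) ≤ (p - 1) * padicValNat p (k.factorial) :=
    Nat.le_mul_of_pos_left _ (by have := hp1 p; omega)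
  omega

lemma norm_EpX_le {k : ℕ} (hk : 1 ≤ k) :
    ‖(p : ℚ_[p]) ^ k / (k.factorial : ℚ_[p])‖ ≤ ((p : ℝ))⁻¹ := by
  have hfne : ((k.factorial : ℚ_[p])) ≠ 0 := by
    exact_mod_cast Nat.cast_ne_zero.mpr k.factorial_ne_zero
  have hp1R : (1 : ℝ) < (p : ℝ) := by exact_mod_cast hp1 p
  set v : ℕ := padicValNat p (k.factorial) with hv
  have hval : ‖(k.factorial : ℚ_[p])‖ = (p : ℝ) ^ (-(v : ℤ)) := by
    rw [Padic.norm_eq_zpow_neg_valuation hfne, Padic.valuation_natCast]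
  rw [norm_div, norm_pow, Padic.norm_p, hval]
  have hle : v ≤ k - 1 := padicValNat_factorial_le p hk
  have hpne : (p : ℝ) ≠ 0 := by positivity
  have hcalc : ((p : ℝ))⁻¹ ^ k / (p : ℝ) ^ (-(v : ℤ)) = (p : ℝ) ^ ((v : ℤ) - (k : ℤ)) := by
    rw [inv_pow, ← zpow_natCast (p : ℝ) k, ← zpow_neg, div_eq_mul_inv, ← zpow_neg,
      ← zpow_add₀ hpne]
    congr 1
    ring
  rw [hcalc, ← zpow_neg_one (p : ℝ)]
  refine zpow_le_zpow_right₀ (le_of_lt hp1R) ?_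
  have : (v : ℤ) ≤ (k : ℤ) - 1 := by
    have : v ≤ k - 1 := hle
    omega
  omega

lemma norm_sum_le_of_le {ι : Type*} {s : Finset ι} {f : ι → ℚ_[p]} {c : ℝ} (hc : 0 ≤ c)
    (h : ∀ i ∈ s, ‖f i‖ ≤ c) : ‖∑ i ∈ s, f i‖ ≤ c := by
  classical
  induction s using Finset.induction with
  | empty => simpa using hc
  | @insert a t hx ih =>
      rw [Finset.sum_insert hx]
      refine le_trans (Padic.nonarchimedean _ _) (max_le ?_ ?_)
      · exact h a (Finset.mem_insert_self a t)
      · exact ih fun i hi => h i (Finset.mem_insert_of_mem hi)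

lemma coeff_Fp_zero : PowerSeries.coeff 0 (Fp p) = 1 := by
  rw [Fp, coeff_E, Finset.sum_range_one]
  simp

lemma norm_coeff_Fp_le_one (m : ℕ) : ‖PowerSeries.coeff m (Fp p)‖ ≤ 1 := by
  induction m using Nat.strong_induction_on with
  | _ m IH =>
  rcases Nat.eq_zero_or_pos m with rfl | hm
  · rw [coeff_Fp_zero]
    norm_num
  have hp0 : 0 < p := by have := hp1 p; omega
  have hpRpos : (0:ℝ) < (p : ℝ)⁻¹ := by
    have : (0:ℝ) < (p:ℝ) := by exact_mod_cast hp0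
    positivity
  set G : PowerSeries ℚ_[p] := ((PowerSeries.trunc m (Fp p) : Polynomial ℚ_[p]) :
    PowerSeries ℚ_[p]) with hG
  have hGc : ∀ i, PowerSeries.coeff i G
      = if i < m then PowerSeries.coeff i (Fp p) else 0 := by
    intro i
    rw [hG, Polynomial.coeff_coe, PowerSeries.coeff_trunc]
  have hGnorm : ∀ i, ‖PowerSeries.coeff i G‖ ≤ 1 := by
    intro i
    rw [hGc]
    split
    · exact IH i (by omega)
    · simp
  have hHlow : ∀ i < m, PowerSeries.coeff i (Fp p - G) = 0 := by
    intro i hi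
    rw [map_sub, hGc, if_pos hi, sub_self]
  -- the coefficient extraction: coeff m (Fp^p) - coeff m (G^p) = p * coeff m (Fp p)
  have hsplit : PowerSeries.coeff m ((Fp p) ^ p) - PowerSeries.coeff m (G ^ p)
      = (p : ℚ_[p]) * PowerSeries.coeff m (Fp p) := by
    have hgeom := geom_sum₂_mul (Fp p) G p
    have h1 : PowerSeries.coeff m ((Fp p) ^ p) - PowerSeries.coeff m (G ^ p)
        = PowerSeries.coeff m
          ((∑ i ∈ Finset.range p, (Fp p) ^ i * G ^ (p - 1 - i)) * (Fp p - G)) := by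
      rw [hgeom, map_sub]
    rw [h1, PowerSeries.coeff_mul]
    rw [Finset.sum_eq_single (0, m)]
    · have hS0 : PowerSeries.coeff 0
          (∑ i ∈ Finset.range p, (Fp p) ^ i * G ^ (p - 1 - i)) = (p : ℚ_[p]) := by
        rw [map_sum]
        have hterm : ∀ i ∈ Finset.range p, PowerSeries.coeff 0
            ((Fp p) ^ i * G ^ (p - 1 - i)) = 1 := by
          intro i _
          have hcF : constantCoeff (Fp p) = 1 := by
            rw [← PowerSeries.coeff_zero_eq_constantCoeff_apply]
            exact coeff_Fp_zero p
          have hcG : constantCoeff G = 1 := by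
            rw [← PowerSeries.coeff_zero_eq_constantCoeff_apply, hGc, if_pos hm]
            rw [PowerSeries.coeff_zero_eq_constantCoeff_apply]
            exact hcF
          rw [PowerSeries.coeff_zero_eq_constantCoeff_apply, map_mul, map_pow, map_pow,
            hcF, hcG, one_pow, one_pow, one_mul]
        rw [Finset.sum_congr rfl hterm, Finset.sum_const, Finset.card_range, nsmul_eq_mul,
          mul_one]
      rw [hS0, map_sub, hGc, if_neg (lt_irrefl m), sub_zero]
    · intro q hq hne
      rw [Finset.HasAntidiagonal.mem_antidiagonal] at hq
      have : q.2 < m := by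
        rcases Nat.lt_or_ge q.2 m with h | h
        · exact h
        · exfalso
          have : q.2 = m := by omega
          have : q.1 = 0 := by omega
          exact hne (Prod.ext this ‹q.2 = m›)
      rw [hHlow q.2 this, mul_zero]
    · intro habs
      exact absurd (Finset.HasAntidiagonal.mem_antidiagonal.mpr (by simp)) habs
  -- the other side
  have hEq2 : PowerSeries.coeff m ((Fp p) ^ p)
      = ∑ q ∈ Finset.HasAntidiagonal.antidiagonal m, PowerSeries.coeff q.1 (expandP p (Fp p)) *
          PowerSeries.coeff q.2
            (E (PowerSeries.C (p : ℚ_[p]) * PowerSeries.X)) := by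
    rw [funEq p, PowerSeries.coeff_mul]
  have hmem : ((m, 0) : ℕ × ℕ) ∈ Finset.HasAntidiagonal.antidiagonal m := by
    rw [Finset.HasAntidiagonal.mem_antidiagonal]
    omega
  have hsum2 : PowerSeries.coeff m ((Fp p) ^ p)
      = PowerSeries.coeff m (expandP p (Fp p))
        + ∑ q ∈ (Finset.HasAntidiagonal.antidiagonal m).erase (m, 0),
            PowerSeries.coeff q.1 (expandP p (Fp p)) *
            PowerSeries.coeff q.2
              (E (PowerSeries.C (p : ℚ_[p]) * PowerSeries.X)) := by
    rw [hEq2, ← Finset.add_sum_erase _ _ hmem, coeff_EpX]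
    norm_num
  have hAG : PowerSeries.coeff m (expandP p (Fp p))
      = PowerSeries.coeff m (expandP p G) := by
    rw [coeff_expandP, coeff_expandP]
    split
    · rw [hGc, if_pos (Nat.div_lt_self hm (hp1 p))]
    · rfl
  have htail : ‖∑ q ∈ (Finset.HasAntidiagonal.antidiagonal m).erase (m, 0),
      PowerSeries.coeff q.1 (expandP p (Fp p)) *
      PowerSeries.coeff q.2
        (E (PowerSeries.C (p : ℚ_[p]) * PowerSeries.X))‖ ≤ (p : ℝ)⁻¹ := by
    refine norm_sum_le_of_le p (le_of_lt hpRpos) ?_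
    intro q hq
    have hq1 := Finset.mem_of_mem_erase hq
    have hqne := Finset.ne_of_mem_erase hq
    rw [Finset.HasAntidiagonal.mem_antidiagonal] at hq1
    have hq2pos : 1 ≤ q.2 := by
      rcases Nat.eq_zero_or_pos q.2 with h0 | h
      · exfalso
        exact hqne (Prod.ext (by omega) h0)
      · exact h
    have hq1lt : q.1 < m := by omega
    have hn1 : ‖PowerSeries.coeff q.1 (expandP p (Fp p))‖ ≤ 1 := by
      rw [coeff_expandP]
      split
      · exact IH _ (by have := Nat.div_le_self q.1 p; omega)
      · simp
    have hn2 : ‖PowerSeries.coeff q.2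
        (E (PowerSeries.C (p : ℚ_[p]) * PowerSeries.X))‖ ≤ (p : ℝ)⁻¹ := by
      rw [coeff_EpX]
      exact norm_EpX_le p hq2pos
    calc ‖_ * _‖ = ‖PowerSeries.coeff q.1 (expandP p (Fp p))‖ *
          ‖PowerSeries.coeff q.2
            (E (PowerSeries.C (p : ℚ_[p]) * PowerSeries.X))‖ := norm_mul _ _
      _ ≤ 1 * (p : ℝ)⁻¹ := by
          exact mul_le_mul hn1 hn2 (norm_nonneg _) zero_le_one
      _ = (p : ℝ)⁻¹ := one_mul _
  have hmodp : ‖PowerSeries.coeff m (expandP p G) -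
      PowerSeries.coeff m (G ^ p)‖ ≤ (p : ℝ)⁻¹ := by
    rw [norm_sub_rev]
    exact norm_coeff_powp_sub_expandP p G hGnorm m
  have hfinal : ‖(p : ℚ_[p]) * PowerSeries.coeff m (Fp p)‖ ≤ (p : ℝ)⁻¹ := by
    have hdecomp : (p : ℚ_[p]) * PowerSeries.coeff m (Fp p)
        = (PowerSeries.coeff m (expandP p G) - PowerSeries.coeff m (G ^ p))
          + ∑ q ∈ (Finset.HasAntidiagonal.antidiagonal m).erase (m, 0),
            PowerSeries.coeff q.1 (expandP p (Fp p)) *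
            PowerSeries.coeff q.2
              (E (PowerSeries.C (p : ℚ_[p]) * PowerSeries.X)) := by
      rw [← hsplit, hsum2, hAG]
      ring
    rw [hdecomp]
    exact le_trans (Padic.nonarchimedean _ _) (max_le hmodp htail)
  rw [norm_mul, Padic.norm_p] at hfinal
  exact le_of_mul_le_mul_left (by rw [mul_one]; exact hfinal) hpRpos

end Padic

end AHwork

/-- **Artin–Hasse integrality**: for a prime `p`, every coefficient of the formal power
series `exp (∑_{n ≥ 0} X ^ (p ^ n) / p ^ n) ∈ ℚ⟦X⟧` is a `p`-integral rational number,
i.e. has nonnegative `p`-adic valuation. -/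
theorem artinHasseExp_coeff_p_integral (p : ℕ) (hp : p.Prime) (m : ℕ) :
    0 ≤ padicValRat p (PowerSeries.coeff m (artinHasseExp p)) := by
  haveI : Fact p.Prime := ⟨hp⟩
  set q : ℚ := PowerSeries.coeff m (artinHasseExp p) with hq
  by_cases h0 : q = 0
  · rw [h0]
    simp [padicValRat]
  · have h1 : ((q : ℚ) : ℚ_[p]) = PowerSeries.coeff m (AHwork.Fp p) := by
      rw [← AHwork.map_AHexp p, PowerSeries.coeff_map]
      rfl
    have h2 : ‖((q : ℚ) : ℚ_[p])‖ ≤ 1 := by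
      rw [h1]
      exact AHwork.norm_coeff_Fp_le_one p m
    rw [Padic.eq_padicNorm] at h2
    have h3 : padicNorm p q ≤ 1 := by exact_mod_cast h2
    rw [padicNorm.eq_zpow_of_nonzero h0] at h3
    by_contra hneg
    push_neg at hneg
    have hple : (1:ℚ) < (p:ℚ) := by exact_mod_cast hp.one_lt
    have hlt : (1:ℚ) < (p:ℚ) ^ (-padicValRat p q) :=
      one_lt_zpow₀ hple (neg_pos.mpr hneg)
    linarith
end
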